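/- Let C(a,b) denote the optimal constant in the Poincaré inequality ‖f‖_{L²(A(a,b))} ≤ C‖∇f‖_{L²(A(a,b))} for W^{1,2} functions on the annulus A(a,b) ⊂ ℝ^d vanishing on the boundary, and let c(a,b) denote the optimal constant in ‖f‖_{L²((a,b))} ≤ c‖f'‖_{L²((a,b))} for W^{1,2} functions on the interval (a,b) vanishing at the endpoints. Then C(a,b) ≤ (b/a)^{(d-1)/2} · c(a,b). -/

import Mathlib

open MeasureTheory Real

/-- The open annulus `{x ∈ ℝ^d : a < |x| < b}`. -/
def annulus (d : ℕ) (a b : ℝ) : Set (EuclideanSpace ℝ (Fin d)) :=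
  {x | a < ‖x‖ ∧ ‖x‖ < b}

/-- Admissible functions for the Dirichlet–Poincaré inequality on the annulus. -/
def AdmissibleOnAnnulus (d : ℕ) (a b : ℝ)
    (u : EuclideanSpace ℝ (Fin d) → ℝ) : Prop :=
  ContinuousOn u (closure (annulus d a b)) ∧
  Set.EqOn u 0 (frontier (annulus d a b)) ∧
  DifferentiableOn ℝ u (annulus d a b) ∧
  MemLp u 2 (volume.restrict (annulus d a b)) ∧
  MemLp (fun x => ‖fderiv ℝ u x‖) 2 (volume.restrict (annulus d a b))

/-- The optimal constant in `‖u‖_{L²(A(a,b))} ≤ C ‖∇u‖_{L²(A(a,b))}` over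
admissible functions vanishing on the boundary of the annulus. -/
noncomputable def annulusPoincareConst (d : ℕ) (a b : ℝ) : ℝ :=
  sInf {C : ℝ | 0 ≤ C ∧ ∀ u : EuclideanSpace ℝ (Fin d) → ℝ,
    AdmissibleOnAnnulus d a b u →
      (∫ x in annulus d a b, u x ^ 2) ≤
        C ^ 2 * ∫ x in annulus d a b, ‖fderiv ℝ u x‖ ^ 2}

/-- Admissible pairs `(f, f')` for the one-dimensional Poincaré inequality on
`(a,b)` with zero boundary data: `f ∈ W^{1,2}((a,b))`, `f(a) = f(b) = 0`. -/
def AdmissibleOnInterval (a b : ℝ) (f f' : ℝ → ℝ) : Prop :=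
  MemLp f' 2 (volume.restrict (Set.Ioo a b)) ∧
  (∀ x ∈ Set.Icc a b, f x = ∫ s in a..x, f' s) ∧ f a = 0 ∧ f b = 0

/-- The optimal constant in `‖f‖_{L²((a,b))} ≤ c ‖f'‖_{L²((a,b))}` over
`W^{1,2}` functions on `(a,b)` vanishing at the endpoints. -/
noncomputable def intervalPoincareConst (a b : ℝ) : ℝ :=
  sInf {c : ℝ | 0 ≤ c ∧ ∀ f f' : ℝ → ℝ, AdmissibleOnInterval a b f f' →
    (∫ t in Set.Ioo a b, f t ^ 2) ≤ c ^ 2 * ∫ t in Set.Ioo a b, f' t ^ 2}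

/-!
Write `x = r • ω` with `ω` on the unit sphere. In polar coordinates the two sides of the annulus
inequality are integrals over `ω` of `∫ₐᵇ u(rω)² r^{d-1} dr` and `∫ₐᵇ |∇u(rω)|² r^{d-1} dr`. For
each `ω` the radial profile `r ↦ u(rω)` vanishes at `a` and `b` and has derivative `∇u(rω)·ω`, of
modulus at most `|∇u(rω)|`, so the one-dimensional inequality applies to it. The weight
`r^{d-1}` lies between `a^{d-1}` and `b^{d-1}`, which costs the factor `(b/a)^{d-1}` in the
squared constant. No interval constant is `0` and `b - a` is one, so multiplying the interval
constants by `(b/a)^{(d-1)/2}` yields annulus constants, and the infima compare.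
-/

open Set
open scoped ENNReal

def PoincareOnInterval (a b c : ℝ) : Prop :=
  ∀ f f' : ℝ → ℝ, AdmissibleOnInterval a b f f' →
    (∫ t in Ioo a b, f t ^ 2) ≤ c ^ 2 * ∫ t in Ioo a b, f' t ^ 2

def PoincareOnAnnulus (d : ℕ) (a b C : ℝ) : Prop :=
  ∀ u : EuclideanSpace ℝ (Fin d) → ℝ, AdmissibleOnAnnulus d a b u →
    (∫ x in annulus d a b, u x ^ 2) ≤ C ^ 2 * ∫ x in annulus d a b, ‖fderiv ℝ u x‖ ^ 2

theorem sq_integral_abs_le_measureReal_mul_integral_sq {α : Type*} [MeasurableSpace α]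
    {μ : Measure α} [IsFiniteMeasure μ] {g : α → ℝ} (hg : MemLp g 2 μ) :
    (∫ x, |g x| ∂μ) ^ 2 ≤ μ.real univ * ∫ x, g x ^ 2 ∂μ := by
  have hpq : Real.HolderConjugate 2 2 := .two_two
  have habs : MemLp (fun x => |g x|) (ENNReal.ofReal 2) μ := by
    rw [ENNReal.ofReal_ofNat]; exact hg.abs
  have h := integral_mul_le_Lp_mul_Lq_of_nonneg hpq (.of_forall fun x => abs_nonneg (g x))
    (.of_forall fun _ => zero_le_one) habs (memLp_const (1 : ℝ))
  simp only [mul_one, one_pow, integral_const, smul_eq_mul, Real.rpow_two, sq_abs] at h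
  calc (∫ x, |g x| ∂μ) ^ 2
      ≤ ((∫ x, g x ^ 2 ∂μ) ^ (1 / 2 : ℝ) * (μ.real univ) ^ (1 / 2 : ℝ)) ^ 2 :=
        pow_le_pow_left₀ (integral_nonneg fun x => abs_nonneg _) h 2
    _ = μ.real univ * ∫ x, g x ^ 2 ∂μ := by
        rw [mul_pow, ← Real.sqrt_eq_rpow, ← Real.sqrt_eq_rpow,
          Real.sq_sqrt (integral_nonneg fun x => sq_nonneg _), Real.sq_sqrt measureReal_nonneg,
          mul_comm]

section Interval

variable {a b : ℝ}

theorem AdmissibleOnInterval.continuousOn {f f' : ℝ → ℝ} (h : AdmissibleOnInterval a b f f') :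
    ContinuousOn f (Icc a b) := by
  have hint : IntegrableOn f' (Icc a b) :=
    (integrableOn_Icc_iff_integrableOn_Ioo).mpr (h.1.integrable one_le_two)
  refine (intervalIntegral.continuousOn_primitive hint).congr fun x hx => ?_
  rw [h.2.1 x hx, intervalIntegral.integral_of_le hx.1]

theorem AdmissibleOnInterval.abs_le {f f' : ℝ → ℝ} (h : AdmissibleOnInterval a b f f') {x : ℝ}
    (hx : x ∈ Icc a b) : |f x| ≤ ∫ s in Ioo a b, |f' s| := by
  rw [h.2.1 x hx]
  calc |∫ s in a..x, f' s| ≤ ∫ s in a..x, |f' s| :=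
        intervalIntegral.abs_integral_le_integral_abs hx.1
    _ = ∫ s in Ioo a x, |f' s| := by
        rw [intervalIntegral.integral_of_le hx.1, integral_Ioc_eq_integral_Ioo]
    _ ≤ ∫ s in Ioo a b, |f' s| :=
        setIntegral_mono_set (h.1.integrable one_le_two).abs (.of_forall fun s => abs_nonneg _)
          (Ioo_subset_Ioo_right hx.2).eventuallyLE

theorem poincareOnInterval_sub (hab : a ≤ b) : PoincareOnInterval a b (b - a) := by
  intro f f' h
  have hf2 : IntegrableOn (fun t => f t ^ 2) (Ioo a b) :=
    (h.continuousOn.pow 2).integrableOn_Icc.mono_set Ioo_subset_Icc_self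
  set M := ∫ s in Ioo a b, |f' s|
  have hM : M ^ 2 ≤ (b - a) * ∫ t in Ioo a b, f' t ^ 2 := by
    simpa [Real.volume_real_Ioo_of_le hab] using
      sq_integral_abs_le_measureReal_mul_integral_sq h.1
  calc (∫ t in Ioo a b, f t ^ 2) ≤ ∫ _ in Ioo a b, M ^ 2 :=
        setIntegral_mono_on hf2 (integrableOn_const measure_Ioo_lt_top.ne) measurableSet_Ioo
          fun x hx => by
            simpa only [sq_abs] using
              pow_le_pow_left₀ (abs_nonneg _) (h.abs_le (Ioo_subset_Icc_self hx)) 2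
    _ = (b - a) * M ^ 2 := by
        rw [setIntegral_const, Real.volume_real_Ioo_of_le hab, smul_eq_mul]
    _ ≤ (b - a) ^ 2 * ∫ t in Ioo a b, f' t ^ 2 := by
        rw [sq (b - a), mul_assoc]; exact mul_le_mul_of_nonneg_left hM (sub_nonneg.2 hab)

theorem admissibleOnInterval_of_hasDerivAt {f f' : ℝ → ℝ}
    (hf : ContinuousOn f (Icc a b)) (hderiv : ∀ x ∈ Ioo a b, HasDerivAt f (f' x) x)
    (hf' : MemLp f' 2 (volume.restrict (Ioo a b))) (ha : f a = 0) (hb : f b = 0) :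
    AdmissibleOnInterval a b f f' := by
  refine ⟨hf', fun x hx => ?_, ha, hb⟩
  have hint : IntervalIntegrable f' volume a x :=
    (intervalIntegrable_iff_integrableOn_Ioo_of_le hx.1).mpr <|
      IntegrableOn.mono_set (hf'.integrable one_le_two) (Ioo_subset_Ioo_right hx.2)
  rw [intervalIntegral.integral_eq_sub_of_hasDeriv_right_of_le hx.1
      (hf.mono (Icc_subset_Icc_right hx.2))
      (fun y hy => (hderiv y (Ioo_subset_Ioo_right hx.2 hy)).hasDerivWithinAt) hint, ha, sub_zero]

theorem PoincareOnInterval.lintegral_le {c : ℝ} (hc : PoincareOnInterval a b c) {f f' : ℝ → ℝ}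
    (h : AdmissibleOnInterval a b f f') :
    ∫⁻ t in Ioo a b, ENNReal.ofReal (f t ^ 2) ≤
      ENNReal.ofReal (c ^ 2) * ∫⁻ t in Ioo a b, ENNReal.ofReal (f' t ^ 2) := by
  have hf2 : IntegrableOn (fun t => f t ^ 2) (Ioo a b) :=
    (h.continuousOn.pow 2).integrableOn_Icc.mono_set Ioo_subset_Icc_self
  rw [← ofReal_integral_eq_lintegral_ofReal hf2 (.of_forall fun t => sq_nonneg _),
    ← ofReal_integral_eq_lintegral_ofReal h.1.integrable_sq (.of_forall fun t => sq_nonneg _),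
    ← ENNReal.ofReal_mul (sq_nonneg c)]
  exact ENNReal.ofReal_le_ofReal (hc f f' h)

theorem not_poincareOnInterval_zero (hab : a < b) : ¬ PoincareOnInterval a b 0 := by
  intro h
  have hderiv : ∀ x, HasDerivAt (fun x => (x - a) * (b - x)) ((b - x) - (x - a)) x := fun x =>
    (((hasDerivAt_id' x).sub_const a).fun_mul ((hasDerivAt_id' x).const_sub b)).congr_deriv
      (by ring)
  have hf' : MemLp (fun x => (b - x) - (x - a)) 2 (volume.restrict (Ioo a b)) :=
    (memLp_two_iff_integrable_sq (by fun_prop)).mpr <|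
      (Continuous.integrableOn_Icc (by fun_prop)).mono_set Ioo_subset_Icc_self
  have hadm := admissibleOnInterval_of_hasDerivAt (by fun_prop) (fun x _ => hderiv x) hf'
    (by simp) (by simp)
  have hpos : 0 < ∫ t in Ioo a b, ((t - a) * (b - t)) ^ 2 := by
    rw [← integral_Ioc_eq_integral_Ioo, ← intervalIntegral.integral_of_le hab.le]
    refine intervalIntegral.intervalIntegral_pos_of_pos_on
      (Continuous.intervalIntegrable (by fun_prop) _ _) (fun x hx => ?_) hab
    exact pow_pos (mul_pos (sub_pos.2 hx.1) (sub_pos.2 hx.2)) 2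
  linarith [h _ _ hadm]

end Interval

section Polar

variable {E : Type*} [NormedAddCommGroup E] [NormedSpace ℝ E] [FiniteDimensional ℝ E]
  [MeasurableSpace E] [BorelSpace E] [Nontrivial E]

theorem lintegral_eq_lintegral_toSphere (μ : Measure E) [μ.IsAddHaarMeasure] {F : E → ℝ≥0∞}
    (hF : AEMeasurable F μ) :
    ∫⁻ x, F x ∂μ = ∫⁻ ω, (∫⁻ r in Ioi (0 : ℝ),
      ENNReal.ofReal (r ^ (Module.finrank ℝ E - 1)) * F (r • (ω : E))) ∂μ.toSphere := by
  have hmp := μ.measurePreserving_homeomorphUnitSphereProd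
  have hs : MeasurableSet ({0}ᶜ : Set E) := (measurableSet_singleton 0).compl
  have hFprod : AEMeasurable (fun p : Metric.sphere (0 : E) 1 × Ioi (0 : ℝ) => F (p.2.1 • p.1.1))
      (μ.toSphere.prod (Measure.volumeIoiPow (Module.finrank ℝ E - 1))) := by
    have hFval : AEMeasurable (fun x : ({0}ᶜ : Set E) => F x) (μ.comap (↑)) :=
      (show AEMeasurable F ((μ.comap (↑)).map ((↑) : ({0}ᶜ : Set E) → E)) by
        rw [map_comap_subtype_coe hs]; exact hF.restrict).comp_measurable measurable_subtype_coe
    rw [← hmp.map_eq, (Homeomorph.measurableEmbedding _).aemeasurable_map_iff]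
    refine hFval.congr (.of_forall fun x => ?_)
    simp [smul_inv_smul₀ (norm_ne_zero_iff.2 x.2)]
  calc ∫⁻ x, F x ∂μ = ∫⁻ x : ({0}ᶜ : Set E), F x ∂(μ.comap (↑)) := by
        rw [lintegral_subtype_comap hs, restrict_compl_singleton]
    _ = ∫⁻ p, F (p.2.1 • p.1.1) ∂(μ.toSphere.prod (Measure.volumeIoiPow _)) := by
        rw [← hmp.lintegral_comp_emb (Homeomorph.measurableEmbedding _)]
        congr 1 with x
        simp [smul_inv_smul₀ (norm_ne_zero_iff.2 x.2)]
    _ = ∫⁻ ω, (∫⁻ r, F (r.1 • ω.1) ∂(Measure.volumeIoiPow _)) ∂μ.toSphere :=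
        lintegral_prod _ hFprod
    _ = _ := by
        congr 1 with ω
        rw [Measure.volumeIoiPow, lintegral_withDensity_eq_lintegral_mul_non_measurable _
          (by fun_prop) (.of_forall fun _ => ENNReal.ofReal_lt_top)]
        exact lintegral_subtype_comap measurableSet_Ioi
          (fun r : ℝ => ENNReal.ofReal (r ^ _) * F (r • (ω : E)))

end Polar

theorem mul_lintegral_weighted_le {α : Type*} [MeasurableSpace α] {μ : Measure α}
    {w F G : α → ℝ≥0∞} {m M K : ℝ≥0∞} (hM : M ≠ ⊤) (hw : ∀ᵐ x ∂μ, m ≤ w x ∧ w x ≤ M)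
    (hFG : ∫⁻ x, F x ∂μ ≤ K * ∫⁻ x, G x ∂μ) :
    m * ∫⁻ x, w x * F x ∂μ ≤ M * K * ∫⁻ x, w x * G x ∂μ :=
  calc m * ∫⁻ x, w x * F x ∂μ ≤ m * ∫⁻ x, M * F x ∂μ := by
        gcongr m * ?_; exact lintegral_mono_ae (hw.mono fun x hx => mul_le_mul_left hx.2 _)
    _ ≤ m * (M * (K * ∫⁻ x, G x ∂μ)) := by rw [lintegral_const_mul' M _ hM]; gcongr
    _ = M * K * (m * ∫⁻ x, G x ∂μ) := by ring
    _ ≤ M * K * ∫⁻ x, m * G x ∂μ := by gcongr; exact lintegral_const_mul_le _ _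
    _ ≤ M * K * ∫⁻ x, w x * G x ∂μ := by
        gcongr _ * ?_; exact lintegral_mono_ae (hw.mono fun x hx => mul_le_mul_left hx.1 _)

section Annulus

variable {d : ℕ} {a b c : ℝ}

local notation "𝔼" => EuclideanSpace ℝ (Fin d)

variable {u : EuclideanSpace ℝ (Fin d) → ℝ}

theorem isOpen_annulus : IsOpen (annulus d a b) :=
  (isOpen_lt continuous_const continuous_norm).inter (isOpen_lt continuous_norm continuous_const)

theorem smul_mem_annulus_iff (ω : Metric.sphere (0 : 𝔼) 1) {r : ℝ} (hr : 0 ≤ r) :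
    r • (ω : 𝔼) ∈ annulus d a b ↔ r ∈ Ioo a b := by
  simp [annulus, norm_smul, abs_of_nonneg hr]

theorem smul_mem_closure_annulus (ha : 0 ≤ a) (hab : a < b) (ω : Metric.sphere (0 : 𝔼) 1) {r : ℝ}
    (hr : r ∈ Icc a b) : r • (ω : 𝔼) ∈ closure (annulus d a b) := by
  rw [← closure_Ioo hab.ne] at hr
  exact map_mem_closure (f := fun s : ℝ => s • (ω : 𝔼)) (by fun_prop) hr
    fun s hs => (smul_mem_annulus_iff ω (ha.trans hs.1.le)).2 hs

theorem smul_mem_frontier_annulus (ha : 0 ≤ a) (hab : a < b) (ω : Metric.sphere (0 : 𝔼) 1)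
    {r : ℝ} (hr : r ∈ Icc a b \ Ioo a b) : r • (ω : 𝔼) ∈ frontier (annulus d a b) := by
  rw [isOpen_annulus.frontier_eq]
  exact ⟨smul_mem_closure_annulus ha hab ω hr.1,
    fun h => hr.2 ((smul_mem_annulus_iff ω (ha.trans hr.1.1)).1 h)⟩

theorem setLIntegral_annulus_eq (hd : d ≠ 0) (ha : 0 ≤ a) {F : 𝔼 → ℝ≥0∞}
    (hF : AEMeasurable F (volume.restrict (annulus d a b))) :
    ∫⁻ x in annulus d a b, F x = ∫⁻ ω, (∫⁻ r in Ioo a b,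
      ENNReal.ofReal (r ^ (d - 1)) * F (r • (ω : 𝔼))) ∂(volume : Measure 𝔼).toSphere := by
  have : Nontrivial 𝔼 := by
    have : Nonempty (Fin d) := ⟨⟨0, Nat.pos_of_ne_zero hd⟩⟩
    infer_instance
  rw [← lintegral_indicator isOpen_annulus.measurableSet, lintegral_eq_lintegral_toSphere _
    ((aemeasurable_indicator_iff isOpen_annulus.measurableSet).2 hF), finrank_euclideanSpace_fin]
  congr 1 with ω
  rw [← lintegral_indicator measurableSet_Ioo, ← lintegral_indicator measurableSet_Ioi]
  congr 1 with r
  by_cases hr : 0 < r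
  · simp [indicator, hr, smul_mem_annulus_iff ω hr.le]
  · have : r ∉ Ioo a b := fun h => hr (ha.trans_lt h.1)
    simp [hr, this]

theorem AdmissibleOnAnnulus.admissibleOnInterval_radial (hu : AdmissibleOnAnnulus d a b u)
    (ha : 0 ≤ a) (hab : a < b) (ω : Metric.sphere (0 : 𝔼) 1)
    (hg : MemLp (fun r => fderiv ℝ u (r • (ω : 𝔼)) ω) 2 (volume.restrict (Ioo a b))) :
    AdmissibleOnInterval a b (fun r => u (r • (ω : 𝔼))) (fun r => fderiv ℝ u (r • (ω : 𝔼)) ω) := by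
  obtain ⟨hcont, hzero, hdiff, -, -⟩ := hu
  have hend : ∀ r ∈ Icc a b \ Ioo a b, u (r • (ω : 𝔼)) = 0 := fun r hr =>
    hzero (smul_mem_frontier_annulus ha hab ω hr)
  refine admissibleOnInterval_of_hasDerivAt ?_ (fun r hr => ?_) hg
    (hend a ⟨left_mem_Icc.2 hab.le, fun h => h.1.false⟩)
    (hend b ⟨right_mem_Icc.2 hab.le, fun h => h.2.false⟩)
  · exact hcont.comp (Continuous.continuousOn (by fun_prop))
      fun r hr => smul_mem_closure_annulus ha hab ω hr
  · have hmem := (smul_mem_annulus_iff ω (ha.trans hr.1.le)).2 hr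
    have hdiffAt := (hdiff _ hmem).differentiableAt (isOpen_annulus.mem_nhds hmem)
    have hline : HasDerivAt (fun s : ℝ => s • (ω : 𝔼)) (ω : 𝔼) r := by
      simpa using (hasDerivAt_id r).smul_const (ω : 𝔼)
    exact hdiffAt.hasFDerivAt.comp_hasDerivAt r hline

theorem PoincareOnInterval.lintegral_radial_le (hc : PoincareOnInterval a b c)
    (hc0 : c ≠ 0) (hu : AdmissibleOnAnnulus d a b u) (ha : 0 ≤ a) (hab : a < b)
    (ω : Metric.sphere (0 : 𝔼) 1) :
    ∫⁻ r in Ioo a b, ENNReal.ofReal (u (r • (ω : 𝔼)) ^ 2) ≤ ENNReal.ofReal (c ^ 2) *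
      ∫⁻ r in Ioo a b, ENNReal.ofReal (fderiv ℝ u (r • (ω : 𝔼)) ω ^ 2) := by
  rcases eq_or_ne (∫⁻ r in Ioo a b, ENNReal.ofReal (fderiv ℝ u (r • (ω : 𝔼)) ω ^ 2)) ⊤
    with hJ | hJ
  · rw [hJ, ENNReal.mul_top (by simpa using hc0)]
    exact le_top
  have hgm : Measurable fun r : ℝ => fderiv ℝ u (r • (ω : 𝔼)) ω :=
    (measurable_fderiv_apply_const ℝ u _).comp (by fun_prop)
  have hg : MemLp (fun r => fderiv ℝ u (r • (ω : 𝔼)) ω) 2 (volume.restrict (Ioo a b)) :=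
    (memLp_two_iff_integrable_sq hgm.aestronglyMeasurable).2
      ⟨(hgm.pow_const 2).aestronglyMeasurable,
        (hasFiniteIntegral_iff_ofReal (.of_forall fun _ => sq_nonneg _)).2 hJ.lt_top⟩
  exact hc.lintegral_le (hu.admissibleOnInterval_radial ha hab ω hg)

theorem PoincareOnInterval.lintegral_annulus_le (hc : PoincareOnInterval a b c) (hc0 : c ≠ 0)
    (hd : d ≠ 0) (ha : 0 < a) (hab : a < b) (hu : AdmissibleOnAnnulus d a b u) :
    ENNReal.ofReal (a ^ (d - 1)) * ∫⁻ x in annulus d a b, ENNReal.ofReal (u x ^ 2) ≤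
      ENNReal.ofReal (b ^ (d - 1)) * ENNReal.ofReal (c ^ 2) *
        ∫⁻ x in annulus d a b, ENNReal.ofReal (‖fderiv ℝ u x‖ ^ 2) := by
  rw [setLIntegral_annulus_eq hd ha.le
      (hu.2.2.2.1.aestronglyMeasurable.aemeasurable.pow_const 2).ennreal_ofReal,
    setLIntegral_annulus_eq hd ha.le (by fun_prop),
    ← lintegral_const_mul' _ _ ENNReal.ofReal_ne_top, ← lintegral_const_mul' _ _ (by finiteness)]
  refine lintegral_mono fun ω => mul_lintegral_weighted_le ENNReal.ofReal_ne_top ?_ ?_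
  · filter_upwards [ae_restrict_mem measurableSet_Ioo] with r hr
    exact ⟨ENNReal.ofReal_le_ofReal (pow_le_pow_left₀ ha.le hr.1.le _),
      ENNReal.ofReal_le_ofReal (pow_le_pow_left₀ (ha.trans hr.1).le hr.2.le _)⟩
  · refine (hc.lintegral_radial_le hc0 hu ha.le hab ω).trans
      (mul_le_mul_right (lintegral_mono fun r => ENNReal.ofReal_le_ofReal ?_) _)
    have hDω := (fderiv ℝ u (r • (ω : 𝔼))).le_opNorm ω
    rw [norm_eq_of_mem_sphere, mul_one, Real.norm_eq_abs] at hDω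
    exact sq_le_sq' (abs_le.1 hDω).1 (abs_le.1 hDω).2

theorem PoincareOnInterval.poincareOnAnnulus (hc : PoincareOnInterval a b c) (hc0 : c ≠ 0)
    (hd : d ≠ 0) (ha : 0 < a) (hab : a < b) :
    PoincareOnAnnulus d a b ((b / a) ^ (((d : ℝ) - 1) / 2) * c) := by
  intro u hu
  have hb : 0 < b := ha.trans hab
  have hreal : a ^ (d - 1) * ∫ x in annulus d a b, u x ^ 2 ≤
      b ^ (d - 1) * c ^ 2 * ∫ x in annulus d a b, ‖fderiv ℝ u x‖ ^ 2 := by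
    rw [integral_eq_lintegral_of_nonneg_ae (.of_forall fun _ => sq_nonneg _)
        (hu.2.2.2.1.aestronglyMeasurable.pow 2),
      integral_eq_lintegral_of_nonneg_ae (.of_forall fun _ => sq_nonneg _) (by fun_prop),
      ← ENNReal.toReal_ofReal (pow_nonneg ha.le _), ← ENNReal.toReal_ofReal (pow_nonneg hb.le _),
      ← ENNReal.toReal_ofReal (sq_nonneg c), ← ENNReal.toReal_mul, ← ENNReal.toReal_mul,
      ← ENNReal.toReal_mul]
    exact ENNReal.toReal_mono (ENNReal.mul_ne_top (by finiteness)
      hu.2.2.2.2.integrable_sq.lintegral_lt_top.ne) (hc.lintegral_annulus_le hc0 hd ha hab hu)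
  have hexp : ((b / a) ^ (((d : ℝ) - 1) / 2) * c) ^ 2 = (b / a) ^ (d - 1) * c ^ 2 := by
    rw [mul_pow, ← Real.rpow_natCast _ 2, ← Real.rpow_mul (div_pos hb ha).le,
      ← Real.rpow_natCast (b / a), Nat.cast_sub (Nat.one_le_iff_ne_zero.2 hd)]
    norm_num
  rw [hexp, div_pow, div_mul_eq_mul_div, div_mul_eq_mul_div, le_div_iff₀ (by positivity),
    mul_comm]
  exact hreal

end Annulus

/-- Comparison of the Poincaré constants of the annulus and the interval:
`C(a,b) ≤ (b/a)^{(d-1)/2} · c(a,b)`. -/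
theorem annulusPoincareConst_le (d : ℕ) (hd : 2 ≤ d) (a b : ℝ)
    (ha : 0 < a) (hab : a < b) :
    annulusPoincareConst d a b ≤
      (b / a) ^ (((d:ℝ) - 1) / 2) * intervalPoincareConst a b := by
  have hβ : 0 ≤ (b / a) ^ (((d : ℝ) - 1) / 2) :=
    Real.rpow_nonneg (div_pos (ha.trans hab) ha).le _
  rw [intervalPoincareConst, ← smul_eq_mul, ← Real.sInf_smul_of_nonneg hβ]
  refine csInf_le_csInf ⟨0, fun C hC => hC.1⟩
    ⟨_, smul_mem_smul_set ⟨sub_nonneg.2 hab.le, poincareOnInterval_sub hab.le⟩⟩ ?_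
  rintro _ ⟨c, ⟨hc0, hc⟩, rfl⟩
  have hc_ne : c ≠ 0 := by rintro rfl; exact not_poincareOnInterval_zero hab hc
  exact ⟨smul_nonneg hβ hc0, PoincareOnInterval.poincareOnAnnulus hc hc_ne (by omega) ha hab⟩
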